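/- Let A be a commutative ring and let φ : A((t)) → A((t)) be an A-algebra endomorphism determined by φ(t) = ψ, where ψ ∈ A((t))* satisfies ν(ψ) ≥ 1 (i.e. ψ = Σ a_l t^l with a_l nilpotent for l < ν, a_ν invertible, ν ≥ 1), so that φ(Σ b_l t^l) = Σ b_l ψ^l (a convergent series). Then for every Laurent series f ∈ A((t)) and every top differential form ω = h dt with h ∈ A((t)), one has res(φ(f)·φ(h)·(∂ψ/∂t) dt) = ν(ψ)·res(f h dt), where res denotes the coefficient of t^{-1}. -/

import Mathlib

/-!
Both sides are additive in `g = f h`. Since `φ` is continuous, a tail of `g` vanishing to high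
order contributes to neither side, so it suffices to treat monomials `c tⁿ`, for which
`φ (c tⁿ) = c ψⁿ`. For `n ≠ -1` the form `ψⁿ dψ` is exact and has zero residue, while
`res (dψ / ψ) = ν` follows from the factorisation `ψ = tᵛ · Q · (1 + m)` with `Q` an invertible
power series and `m` nilpotent, whose three factors have logarithmic residues `ν`, `0`, `0`.
-/

open HahnSeries

/-- Termwise derivative of a Laurent series. -/
noncomputable def lderiv {A : Type*} [CommRing A] (f : LaurentSeries A) : LaurentSeries A where
  coeff := fun l => (l + 1) • f.coeff (l + 1)
  isPWO_support' := by
    have h : (Function.support fun l : ℤ => (l + 1) • f.coeff (l + 1)) ⊆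
        (fun l : ℤ => l - 1) '' f.support := by
      intro l hl
      have hc : f.coeff (l + 1) ≠ 0 := by
        intro h0; apply hl; simp [Function.mem_support, h0]
      exact ⟨l + 1, hc, by ring⟩
    refine (f.isPWO_support.image_of_monotoneOn ?_).mono h
    exact fun a _ b _ hab => by omega

/-- A map `A((t)) → A((t))` is continuous at `0` for the topology with base of
neighborhoods of zero given by the submodules `tˡA[[t]]`, `l ∈ ℤ`. -/
def IsContMap {A : Type*} [CommRing A] (φ : LaurentSeries A → LaurentSeries A) : Prop :=
  ∀ d : ℤ, ∃ e : ℤ, ∀ f : LaurentSeries A,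
    (∀ i : ℤ, i < e → f.coeff i = 0) → ∀ i : ℤ, i < d → (φ f).coeff i = 0

protected lemma HahnSeries.map_pow {Γ R S : Type*} [AddCommMonoid Γ] [PartialOrder Γ]
    [IsOrderedCancelAddMonoid Γ] [Semiring R] [Semiring S] (f : R →+* S) (x : R⟦Γ⟧) (k : ℕ) :
    (x ^ k).map f = x.map f ^ k := by
  induction k with
  | zero => exact HahnSeries.map_one f.toMonoidWithZeroHom
  | succ k ih =>
    rw [pow_succ, pow_succ, ← ih]
    exact HahnSeries.map_mul f.toNonUnitalRingHom

section

variable {A : Type*} [CommRing A]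

@[simp] lemma lderiv_coeff (x : LaurentSeries A) (i : ℤ) :
    (lderiv x).coeff i = (i + 1) • x.coeff (i + 1) := rfl

/-- `t d/dt`: unlike `d/dt` it preserves supports, so its Leibniz rule needs no reindexing. -/
noncomputable def eulerDeriv (x : LaurentSeries A) : LaurentSeries A where
  coeff i := i • x.coeff i
  isPWO_support' := x.isPWO_support.mono fun i hi h => hi (by simp only [h, smul_zero])

@[simp] lemma eulerDeriv_coeff (x : LaurentSeries A) (i : ℤ) :
    (eulerDeriv x).coeff i = i • x.coeff i := rfl

lemma support_eulerDeriv_subset (x : LaurentSeries A) : (eulerDeriv x).support ⊆ x.support :=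
  fun i hi h => hi (by rw [eulerDeriv_coeff, h, smul_zero])

lemma eulerDeriv_mul (x y : LaurentSeries A) :
    eulerDeriv (x * y) = eulerDeriv x * y + x * eulerDeriv y := by
  ext n
  rw [coeff_add, coeff_mul_left' x.isPWO_support (support_eulerDeriv_subset x),
    coeff_mul_right' y.isPWO_support (support_eulerDeriv_subset y), ← Finset.sum_add_distrib,
    eulerDeriv_coeff, coeff_mul, Finset.smul_sum]
  refine Finset.sum_congr rfl fun ij hij => ?_
  rw [eulerDeriv_coeff, eulerDeriv_coeff, ← (Finset.mem_antidiagonal.mp hij).2.2, add_smul,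
    smul_mul_assoc, mul_smul_comm]

lemma lderiv_eq_single_mul_eulerDeriv (x : LaurentSeries A) :
    lderiv x = single (-1) 1 * eulerDeriv x := by
  ext i
  obtain ⟨j, rfl⟩ : ∃ j, i = j + -1 := ⟨i + 1, by ring⟩
  rw [coeff_single_mul_add, one_mul, lderiv_coeff, eulerDeriv_coeff, neg_add_cancel_right]

lemma lderiv_mul (x y : LaurentSeries A) :
    lderiv (x * y) = lderiv x * y + x * lderiv y := by
  simp only [lderiv_eq_single_mul_eulerDeriv, eulerDeriv_mul]
  ring

lemma lderiv_add (x y : LaurentSeries A) : lderiv (x + y) = lderiv x + lderiv y := by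
  ext i; simp [smul_add]

lemma lderiv_neg (x : LaurentSeries A) : lderiv (-x) = -lderiv x := by
  ext i; simp

lemma lderiv_single (n : ℤ) : lderiv (single n (1 : A)) = single (n - 1) (n : A) := by
  ext i
  rw [lderiv_coeff, coeff_single, coeff_single]
  by_cases hi : i = n - 1
  · simp [hi]
  · rw [if_neg (by omega), if_neg hi, smul_zero]

lemma lderiv_one : lderiv (1 : LaurentSeries A) = 0 := by
  rw [← single_zero_one, lderiv_single, Int.cast_zero, single_eq_zero]

lemma lderiv_pow (x : LaurentSeries A) (k : ℕ) :
    lderiv (x ^ (k + 1)) = (k + 1) • (x ^ k * lderiv x) := by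
  induction k with
  | zero => simp
  | succ k ih =>
    rw [pow_succ, lderiv_mul, ih, smul_mul_assoc, add_smul, one_smul]
    ring

lemma coeff_lderiv_neg_one (x : LaurentSeries A) : (lderiv x).coeff (-1) = 0 := by
  simp

lemma coeff_lderiv_eq_zero_of_lt {x : LaurentSeries A} {a : ℤ} (hx : ∀ i < a, x.coeff i = 0)
    {i : ℤ} (hi : i < a - 1) : (lderiv x).coeff i = 0 := by
  rw [lderiv_coeff, hx _ (by omega), smul_zero]

lemma lderiv_map {B : Type*} [CommRing B] (f : A →+* B) (x : LaurentSeries A) :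
    lderiv (x.map f) = (lderiv x).map f := by
  ext i
  simp

lemma coeff_mul_eq_zero_of_lt {x y : LaurentSeries A} {a b : ℤ} (hx : ∀ i < a, x.coeff i = 0)
    (hy : ∀ i < b, y.coeff i = 0) {i : ℤ} (hi : i < a + b) : (x * y).coeff i = 0 := by
  have hxa : (a : WithTop ℤ) ≤ x.orderTop := le_orderTop_iff_forall.mpr fun j hj =>
    hx j (WithTop.coe_lt_coe.mp hj)
  have hyb : (b : WithTop ℤ) ≤ y.orderTop := le_orderTop_iff_forall.mpr fun j hj =>
    hy j (WithTop.coe_lt_coe.mp hj)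
  refine coeff_eq_zero_of_lt_orderTop (lt_of_lt_of_le ?_ (orderTop_add_le_mul (x := x) (y := y)))
  exact lt_of_lt_of_le (WithTop.coe_lt_coe.mpr hi) (add_le_add hxa hyb)

lemma coeff_pow_mul_lderiv_of_noZeroSMulDivisors [NoZeroSMulDivisors ℕ A] (x : LaurentSeries A)
    (k : ℕ) : (x ^ k * lderiv x).coeff (-1) = 0 := by
  have h := coeff_lderiv_neg_one (x ^ (k + 1))
  rw [lderiv_pow, coeff_smul] at h
  exact (smul_eq_zero.mp h).resolve_left k.succ_ne_zero

lemma exists_mvPolynomial_map_eq (x : LaurentSeries A) :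
    ∃ (G : LaurentSeries (MvPolynomial ℤ ℤ)) (f : MvPolynomial ℤ ℤ →+* A), G.map f = x := by
  classical
  refine ⟨{ coeff := fun i => if x.coeff i = 0 then 0 else MvPolynomial.X i
            isPWO_support' := x.isPWO_support.mono fun i hi h => hi (by simp [h]) },
    MvPolynomial.eval₂Hom (Int.castRingHom A) x.coeff, ?_⟩
  ext i
  by_cases h : x.coeff i = 0 <;> simp [h]

/-- Transported from a torsion-free coefficient ring, where `(k + 1) • xᵏ dx = d(xᵏ⁺¹)`. -/
lemma coeff_pow_mul_lderiv (x : LaurentSeries A) (k : ℕ) : (x ^ k * lderiv x).coeff (-1) = 0 := by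
  obtain ⟨G, f, rfl⟩ := exists_mvPolynomial_map_eq x
  calc ((G.map f) ^ k * lderiv (G.map f)).coeff (-1)
      = ((G ^ k * lderiv G).map f).coeff (-1) := by
        rw [lderiv_map, ← HahnSeries.map_pow]
        exact congrArg (coeff · (-1)) (HahnSeries.map_mul f.toNonUnitalRingHom).symm
    _ = f ((G ^ k * lderiv G).coeff (-1)) := rfl
    _ = 0 := by rw [coeff_pow_mul_lderiv_of_noZeroSMulDivisors, map_zero]

lemma algebraMap_eq_C (c : A) : algebraMap A (LaurentSeries A) c = C c := by
  rw [HahnSeries.algebraMap_apply', PowerSeries.algebraMap_apply, Algebra.algebraMap_self,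
    RingHom.id_apply, ofPowerSeries_C]

noncomputable def resLogDeriv (u : (LaurentSeries A)ˣ) : A :=
  (lderiv (u : LaurentSeries A) * ↑u⁻¹).coeff (-1)

lemma resLogDeriv_mul (u v : (LaurentSeries A)ˣ) :
    resLogDeriv (u * v) = resLogDeriv u + resLogDeriv v := by
  have hu := u.mul_inv
  have hv := v.mul_inv
  have : lderiv (↑u * ↑v : LaurentSeries A) * (↑v⁻¹ * ↑u⁻¹ : LaurentSeries A) =
      lderiv (u : LaurentSeries A) * (↑u⁻¹ : LaurentSeries A) +
        lderiv (v : LaurentSeries A) * (↑v⁻¹ : LaurentSeries A) := by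
    rw [lderiv_mul]
    linear_combination (lderiv (u : LaurentSeries A) * (↑u⁻¹ : LaurentSeries A)) * hv +
      (lderiv (v : LaurentSeries A) * (↑v⁻¹ : LaurentSeries A)) * hu
  rw [resLogDeriv, Units.val_mul, mul_inv_rev, Units.val_mul, this, coeff_add]
  rfl

lemma coeff_lderiv_mul_eq_zero_of_coeff_neg {x y : LaurentSeries A} (hx : ∀ i < 0, x.coeff i = 0)
    (hy : ∀ i < 0, y.coeff i = 0) : (lderiv x * y).coeff (-1) = 0 := by
  refine coeff_mul_eq_zero_of_lt (a := 0) (b := 0) (fun i hi => ?_) hy (by norm_num)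
  rcases lt_or_eq_of_le (Int.le_sub_one_of_lt hi) with hi | rfl
  · exact coeff_lderiv_eq_zero_of_lt hx (by omega)
  · exact coeff_lderiv_neg_one x

lemma coeff_ofPowerSeries_of_neg (q : PowerSeries A) {i : ℤ} (hi : i < 0) :
    (ofPowerSeries ℤ A q).coeff i = 0 := by
  rw [ofPowerSeries_apply, embDomain_of_notMem_range]
  rintro ⟨n, rfl⟩
  exact absurd hi (by simp)

lemma ofPowerSeries_mk_coeff {x : LaurentSeries A} (hx : ∀ i < 0, x.coeff i = 0) :
    ofPowerSeries ℤ A (PowerSeries.mk fun n => x.coeff n) = x := by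
  ext i
  rcases lt_or_ge i 0 with hi | hi
  · rw [coeff_ofPowerSeries_of_neg _ hi, hx i hi]
  · lift i to ℕ using hi
    rw [ofPowerSeries_apply_coeff, PowerSeries.coeff_mk]

lemma exists_unit_resLogDeriv_eq_zero_of_coeff_neg {x : LaurentSeries A}
    (hx : ∀ i < 0, x.coeff i = 0) (h0 : IsUnit (x.coeff 0)) :
    ∃ u : (LaurentSeries A)ˣ, ↑u = x ∧ resLogDeriv u = 0 := by
  have hq : IsUnit (PowerSeries.mk fun n => x.coeff n) := by
    rwa [PowerSeries.isUnit_iff_constantCoeff, ← PowerSeries.coeff_zero_eq_constantCoeff_apply,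
      PowerSeries.coeff_mk]
  set u := Units.map (ofPowerSeries ℤ A).toMonoidHom hq.unit
  have hux : (u : LaurentSeries A) = x := ofPowerSeries_mk_coeff hx
  refine ⟨u, hux, coeff_lderiv_mul_eq_zero_of_coeff_neg (hux ▸ hx) fun i hi => ?_⟩
  exact coeff_ofPowerSeries_of_neg _ hi

lemma resLogDeriv_eq_zero_of_isNilpotent {u : (LaurentSeries A)ˣ}
    (hu : IsNilpotent ((u : LaurentSeries A) - 1)) : resLogDeriv u = 0 := by
  obtain ⟨K, hK⟩ := hu
  set m := (u : LaurentSeries A) - 1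
  have hum : (u : LaurentSeries A) = 1 + m := by simp [m]
  have hinv : (↑u⁻¹ : LaurentSeries A) = ∑ j ∈ Finset.range K, (-m) ^ j := by
    refine Units.inv_eq_of_mul_eq_one_right ?_
    rw [hum, ← sub_neg_eq_add, mul_neg_geom_sum, neg_pow, hK, mul_zero, sub_zero]
  rw [resLogDeriv, hinv, Finset.mul_sum, coeff_sum]
  refine Finset.sum_eq_zero fun j _ => ?_
  rw [hum, lderiv_add, lderiv_one, zero_add, ← neg_neg m, lderiv_neg, neg_mul, coeff_neg,
    neg_neg, mul_comm, coeff_pow_mul_lderiv, neg_zero]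

noncomputable def unitX : (LaurentSeries A)ˣ where
  val := single 1 1
  inv := single (-1) 1
  val_inv := by rw [single_mul_single, add_neg_cancel, mul_one, single_zero_one]
  inv_val := by rw [single_mul_single, neg_add_cancel, mul_one, single_zero_one]

lemma coe_unitX_zpow (n : ℤ) :
    ((unitX ^ n : (LaurentSeries A)ˣ) : LaurentSeries A) = single n 1 := by
  induction n using Int.induction_on with
  | zero => simp
  | succ n ih =>
    rw [zpow_add_one, Units.val_mul, ih]
    exact (single_mul_single ..).trans (by rw [mul_one])
  | pred n ih =>
    rw [zpow_sub_one, Units.val_mul, ih]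
    exact (single_mul_single ..).trans (by rw [mul_one, sub_eq_add_neg])

lemma resLogDeriv_unitX_zpow (n : ℤ) : resLogDeriv (unitX ^ n : (LaurentSeries A)ˣ) = n := by
  rw [resLogDeriv, ← zpow_neg, coe_unitX_zpow, coe_unitX_zpow, lderiv_single, single_mul_single,
    mul_one, show n - 1 + -n = -1 by ring, coeff_single_same]

lemma support_truncLT_finite (x : LaurentSeries A) (N : ℤ) : (truncLT N x).support.Finite :=
  (Set.finite_Ico x.order N).subset fun _ hi =>
    ⟨order_le_of_coeff_ne_zero (support_truncLT_subset N x hi),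
      not_le.mp fun h => hi (coeff_truncLT_of_le h x)⟩

lemma sum_single_coeff_of_support_finite {x : LaurentSeries A} (hx : x.support.Finite) :
    ∑ i ∈ hx.toFinset, single i (x.coeff i) = x := by
  ext j
  rw [coeff_sum, Finset.sum_eq_single j (fun i _ hij => coeff_single_of_ne hij.symm)
    fun hj => by simpa using hj, coeff_single_same]

lemma isNilpotent_of_support_finite {x : LaurentSeries A} (hx : x.support.Finite)
    (h : ∀ i, IsNilpotent (x.coeff i)) : IsNilpotent x := by
  rw [← sum_single_coeff_of_support_finite hx]
  refine isNilpotent_sum fun i _ => ?_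
  obtain ⟨n, hn⟩ := h i
  exact ⟨n, by rw [single_pow, hn, single_eq_zero]⟩

lemma AddMonoidHom.apply_eq_of_support_finite {M : Type*} [AddCommMonoid M]
    {L₁ L₂ : LaurentSeries A →+ M}
    (h : ∀ (n : ℤ) (c : A), L₁ (HahnSeries.single n c) = L₂ (HahnSeries.single n c))
    {x : LaurentSeries A} (hx : x.support.Finite) : L₁ x = L₂ x := by
  rw [← sum_single_coeff_of_support_finite hx, map_sum, map_sum]
  exact Finset.sum_congr rfl fun i _ => h i _

lemma AddMonoidHom.eq_of_eq_on_single_of_eq_on_tail {M : Type*} [AddCommGroup M]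
    {L₁ L₂ : LaurentSeries A →+ M}
    (h : ∀ (n : ℤ) (c : A), L₁ (HahnSeries.single n c) = L₂ (HahnSeries.single n c)) (N : ℤ)
    (htail : ∀ x : LaurentSeries A, (∀ i < N, x.coeff i = 0) → L₁ x = L₂ x) : L₁ = L₂ := by
  ext x
  rw [← add_sub_cancel (truncLT N x) x, map_add, map_add,
    AddMonoidHom.apply_eq_of_support_finite h (support_truncLT_finite x N), htail]
  intro i hi
  rw [coeff_sub, coeff_truncLT_of_lt hi, sub_self]

theorem exists_unit_resLogDeriv_eq (ψ : LaurentSeries A) (ν : ℤ) (hunit : IsUnit (ψ.coeff ν))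
    (hnil : ∀ l < ν, IsNilpotent (ψ.coeff l)) :
    ∃ u : (LaurentSeries A)ˣ, ↑u = ψ ∧ resLogDeriv u = ν := by
  set P := single (-ν) (1 : A) * ψ with hP
  have hPcoeff : ∀ k, P.coeff k = ψ.coeff (k + ν) := fun k => by
    simpa using coeff_single_mul_add (r := (1 : A)) (x := ψ) (a := k + ν) (b := -ν)
  set η := truncLT 0 P
  have hη : IsNilpotent η := isNilpotent_of_support_finite (support_truncLT_finite P 0) fun i => by
    rw [HahnSeries.coeff_truncLT]
    split_ifs with hi
    · exact hPcoeff i ▸ hnil _ (by omega)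
    · exact IsNilpotent.zero
  obtain ⟨q, hq, hresq⟩ := exists_unit_resLogDeriv_eq_zero_of_coeff_neg (x := P - η)
    (fun i hi => by rw [coeff_sub, coeff_truncLT_of_lt hi, sub_self])
    (by rwa [coeff_sub, coeff_truncLT_of_le le_rfl, sub_zero, hPcoeff, zero_add])
  have hm : IsNilpotent (η * ↑q⁻¹) := (Commute.all _ _).isNilpotent_mul_right hη
  refine ⟨unitX ^ ν * q * hm.isUnit_one_add.unit, ?_, ?_⟩
  · have hs : single ν (1 : A) * single (-ν) 1 = 1 := by
      rw [single_mul_single, add_neg_cancel, mul_one, single_zero_one]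
    rw [Units.val_mul, Units.val_mul, coe_unitX_zpow, IsUnit.unit_spec]
    linear_combination (single ν 1 * η) * q.mul_inv + single ν 1 * hq + ψ * hs + single ν 1 * hP
  · rw [resLogDeriv_mul, resLogDeriv_mul, resLogDeriv_unitX_zpow, hresq,
      resLogDeriv_eq_zero_of_isNilpotent (by simpa using hm), add_zero, add_zero]

lemma coeff_zpow_mul_lderiv (u : (LaurentSeries A)ˣ) (n : ℤ) :
    ((u ^ n : (LaurentSeries A)ˣ) * lderiv (u : LaurentSeries A)).coeff (-1) =
      if n = -1 then resLogDeriv u else 0 := by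
  obtain ⟨k, rfl | rfl⟩ := Int.eq_nat_or_neg n
  · rw [if_neg (by omega), zpow_natCast, Units.val_pow_eq_pow_val, coeff_pow_mul_lderiv]
  rcases k with _ | _ | k
  · simp
  · simp [resLogDeriv, mul_comm]
  set W : LaurentSeries A := ↑u⁻¹
  have hW : ((u ^ (-((k + 2 : ℕ) : ℤ)) : (LaurentSeries A)ˣ) : LaurentSeries A) = W ^ (k + 2) := by
    rw [zpow_neg, zpow_natCast, ← inv_pow, Units.val_pow_eq_pow_val]
  have h0 : lderiv (u : LaurentSeries A) * W + u * lderiv W = 0 := by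
    rw [← lderiv_mul, u.mul_inv, lderiv_one]
  have hder : W ^ (k + 2) * lderiv (u : LaurentSeries A) = -(W ^ k * lderiv W) := by
    linear_combination W ^ (k + 1) * h0 - (W ^ k * lderiv W) * u.inv_mul
  rw [if_neg (by omega), hW, hder, coeff_neg, coeff_pow_mul_lderiv, neg_zero]

lemma coeff_algHom_single_mul_lderiv (φ : LaurentSeries A →ₐ[A] LaurentSeries A)
    {u : (LaurentSeries A)ˣ} (hφt : φ (single 1 1) = u) (n : ℤ) (c : A) :
    (φ (single n c) * lderiv (u : LaurentSeries A)).coeff (-1) =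
      (single n c).coeff (-1) * resLogDeriv u := by
  have hφX : Units.map (φ : LaurentSeries A →* LaurentSeries A) unitX = u := Units.ext hφt
  have hc : single n c = algebraMap A (LaurentSeries A) c * single n 1 := by
    rw [algebraMap_eq_C, C_apply, single_mul_single, zero_add, mul_one]
  have hφ : φ (single n c) = C c * ((u ^ n : (LaurentSeries A)ˣ) : LaurentSeries A) := by
    rw [hc, map_mul, φ.commutes, algebraMap_eq_C, ← coe_unitX_zpow, ← hφX, ← map_zpow,
      Units.coe_map, MonoidHom.coe_coe]
  rw [hφ, mul_assoc, C_apply, coeff_single_zero_mul, coeff_zpow_mul_lderiv, coeff_single]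
  rcases eq_or_ne n (-1) with rfl | hn
  · simp
  · simp [hn, hn.symm]

end

theorem residue_of_substitution_general {A : Type*} [CommRing A]
    (ψ : LaurentSeries A) (ν : ℤ)
    (hunit : IsUnit (ψ.coeff ν)) (hnil : ∀ l : ℤ, l < ν → IsNilpotent (ψ.coeff l))
    (φ : LaurentSeries A →ₐ[A] LaurentSeries A) (hcont : IsContMap ⇑φ)
    (hφt : φ (HahnSeries.single 1 1) = ψ) :
    ∀ f h : LaurentSeries A,
      (φ f * φ h * lderiv ψ).coeff (-1) = ν • ((f * h).coeff (-1)) := by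
  obtain ⟨u, rfl, hu⟩ := exists_unit_resLogDeriv_eq ψ ν hunit hnil
  let L₁ : LaurentSeries A →+ A :=
    AddMonoidHom.mk' (fun g => (φ g * lderiv (u : LaurentSeries A)).coeff (-1))
      fun a b => by rw [map_add, add_mul, coeff_add]
  let L₂ : LaurentSeries A →+ A :=
    AddMonoidHom.mk' (fun g => ν • g.coeff (-1)) fun a b => by rw [coeff_add, smul_add]
  suffices key : L₁ = L₂ by
    intro f h
    simpa [L₁, L₂] using DFunLike.congr_fun key (f * h)
  obtain ⟨e, he⟩ := hcont (2 - (u : LaurentSeries A).order)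
  refine AddMonoidHom.eq_of_eq_on_single_of_eq_on_tail (fun n c => ?_) (max e 0) fun x hx => ?_
  · change (φ (single n c) * lderiv (u : LaurentSeries A)).coeff (-1) = ν • (single n c).coeff (-1)
    rw [coeff_algHom_single_mul_lderiv φ hφt, hu, zsmul_eq_mul, mul_comm]
  · have hu' (i : ℤ) (hi : i < (u : LaurentSeries A).order - 1) :
        (lderiv (u : LaurentSeries A)).coeff i = 0 :=
      coeff_lderiv_eq_zero_of_lt (fun _ => coeff_eq_zero_of_lt_order) hi
    change (φ x * lderiv (u : LaurentSeries A)).coeff (-1) = ν • x.coeff (-1)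
    rw [coeff_mul_eq_zero_of_lt (he x fun i hi => hx i (lt_max_of_lt_left hi)) hu' (by omega),
      hx (-1) (by omega), smul_zero]

/-- Let `φ` be the continuous `A`-algebra endomorphism of `A((t))` with `φ(t) = ψ`,
where `ψ ∈ A((t))*` has `ν(ψ) = ν ≥ 1` (the coefficient of `t^ν` is a unit and all lower
coefficients are nilpotent). Then for all `f, h ∈ A((t))`:
`res(φ(f)·φ(h)·(∂ψ/∂t) dt) = ν · res(f·h dt)`. -/
theorem residue_of_substitution {A : Type*} [CommRing A]
    (ψ : LaurentSeries A) (hψ : IsUnit ψ) (ν : ℤ) (hν : 1 ≤ ν)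
    (hunit : IsUnit (ψ.coeff ν)) (hnil : ∀ l : ℤ, l < ν → IsNilpotent (ψ.coeff l))
    (φ : LaurentSeries A →ₐ[A] LaurentSeries A) (hcont : IsContMap ⇑φ)
    (hφt : φ (HahnSeries.single 1 1) = ψ) :
    ∀ f h : LaurentSeries A,
      (φ f * φ h * lderiv ψ).coeff (-1) = ν • ((f * h).coeff (-1)) :=
  residue_of_substitution_general ψ ν hunit hnil φ hcont hφt
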